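/- arXiv:1103.2918 — 2 statements merged into one kernel-verified Lean document; each statement's English description precedes it below -/
import Mathlib

section
/- Let T : C[0,1] → C[0,1] be a positive linear operator with T(e₀) = e₀ and T(e₁) ≤ e₁ (pointwise on [0,1]), and let g ∈ C[0,1] be twice continuously differentiable on [0,1], nonincreasing and convex. Then for every x ∈ [0,1] and every m ∈ ℕ one has g(x) ≤ T^m(g;x) ≤ T^{m+1}(g;x) ≤ ‖g‖; in particular the sequence of functions (T^m(g))_m is pointwise nondecreasing and uniformly bounded by ‖g‖. -/
open Filter

noncomputable section

/-- The unit interval `[0,1]` as a subset of `ℝ`. -/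
abbrev I01 : Set ℝ := Set.Icc 0 1

/-- The space `C[0,1]` of continuous real-valued functions on `[0,1]`. -/
abbrev CI := C(I01, ℝ)

/-- The monomial `e i : x ↦ x ^ i`. -/
def e (i : ℕ) : CI := ⟨fun x => (x : ℝ) ^ i, (continuous_subtype_val).pow i⟩

/-- A linear operator on `C[0,1]` is positive if it maps nonnegative functions to
nonnegative functions. -/
def IsPositive (T : CI →ₗ[ℝ] CI) : Prop :=
  ∀ f : CI, (∀ x, 0 ≤ f x) → ∀ x, 0 ≤ T f x

/-- The `m`-th iterate of `T`. -/
def iter (T : CI →ₗ[ℝ] CI) : ℕ → (CI →ₗ[ℝ] CI)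
  | 0 => LinearMap.id
  | m + 1 => T ∘ₗ iter T m

/-!
A convex `g` lies above its tangent line at `x₀`, whose slope is `≤ 0` because `g` is
nonincreasing. Applying the positive operator `T` to this affine minorant and using
`T e₀ = e₀`, `T e₁ ≤ e₁` gives `g x₀ ≤ T g x₀`. Positivity makes `T` monotone, so `g ≤ T g`
propagates to the iterates, and `T` maps the order interval below the constant `‖g‖` to itself.
-/

theorem ConvexOn.add_derivWithin_mul_sub_le {S : Set ℝ} {f : ℝ → ℝ} {x y : ℝ}
    (hfc : ConvexOn ℝ S f) (hx : x ∈ S) (hy : y ∈ S) (hfd : DifferentiableWithinAt ℝ f S x) :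
    f x + derivWithin f S x * (y - x) ≤ f y := by
  rcases lt_trichotomy y x with hyx | rfl | hxy
  · have := hfc.slope_le_derivWithin hy hx hyx hfd
    rw [slope_def_field, div_le_iff₀ (sub_pos.2 hyx)] at this
    linarith
  · simp
  · have := hfc.derivWithin_le_slope hx hy hxy hfd
    rw [slope_def_field, le_div_iff₀ (sub_pos.2 hxy)] at this
    linarith

@[simp]
theorem e_zero_apply (x : I01) : e 0 x = 1 := pow_zero _

@[simp]
theorem e_one_apply (x : I01) : e 1 x = x := pow_one _

namespace IsPositive

variable {T : CI →ₗ[ℝ] CI}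

theorem monotone (hT : IsPositive T) : Monotone T := by
  intro f h hfh
  rw [ContinuousMap.le_def] at hfh ⊢
  intro x
  simpa [sub_nonneg] using hT (h - f) (fun y => sub_nonneg.2 (hfh y)) x

theorem mapsTo_Iic_smul_e_zero (hT : IsPositive T) (h0 : T (e 0) = e 0) (c : ℝ) :
    Set.MapsTo T (Set.Iic (c • e 0)) (Set.Iic (c • e 0)) := fun f hf => by
  simpa [h0] using hT.monotone hf

theorem affine_le_apply (hT : IsPositive T) (h0 : T (e 0) = e 0)
    (h1 : ∀ x : I01, T (e 1) x ≤ e 1 x) {f : CI} {a c : ℝ} (hc : c ≤ 0)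
    (hf : ∀ t : I01, a + c * t ≤ f t) (x : I01) :
    a + c * x ≤ T f x := by
  have hle : a • e 0 + c • e 1 ≤ f := fun t => by simpa using hf t
  have hTe1 : c * x ≤ c * T (e 1) x := mul_le_mul_of_nonpos_left (by simpa using h1 x) hc
  have := ContinuousMap.le_def.1 (hT.monotone hle) x
  simp only [map_add, map_smul, h0, ContinuousMap.add_apply, ContinuousMap.smul_apply,
    smul_eq_mul, e_zero_apply, mul_one] at this
  linarith

theorem le_apply_of_antitoneOn_of_convexOn (hT : IsPositive T) (h0 : T (e 0) = e 0)
    (h1 : ∀ x : I01, T (e 1) x ≤ e 1 x) {g : ℝ → ℝ} {G : CI} (hGg : ∀ x : I01, G x = g x)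
    (hdiff : DifferentiableOn ℝ g I01) (hanti : AntitoneOn g I01)
    (hconvex : ConvexOn ℝ I01 g) : G ≤ T G := ContinuousMap.le_def.2 fun x₀ => by
  have := hT.affine_le_apply h0 h1 hanti.derivWithin_nonpos
    (a := g x₀ - derivWithin g I01 x₀ * x₀) (f := G)
    (fun t => by linarith [hGg t, hconvex.add_derivWithin_mul_sub_le x₀.2 t.2 (hdiff x₀ x₀.2)]) x₀
  rw [hGg]
  linarith

end IsPositive

theorem coe_iter (T : CI →ₗ[ℝ] CI) (m : ℕ) : ⇑(iter T m) = (⇑T)^[m] := by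
  induction m with
  | zero => rfl
  | succ m ih => rw [Function.iterate_succ', ← ih]; rfl

theorem stmt10 (T : CI →ₗ[ℝ] CI) (hpos : IsPositive T)
    (h0 : T (e 0) = e 0) (h1 : ∀ x : I01, T (e 1) x ≤ e 1 x)
    (g : ℝ → ℝ) (G : CI) (hGg : ∀ x : I01, G x = g x)
    (hg : ContDiffOn ℝ 2 g I01)
    (hanti : AntitoneOn g I01) (hconvex : ConvexOn ℝ I01 g) :
    ∀ x : I01, ∀ m : ℕ,
      g x ≤ iter T m G x ∧ iter T m G x ≤ iter T (m + 1) G x ∧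
        iter T (m + 1) G x ≤ ‖G‖ := by
  have hG := hpos.le_apply_of_antitoneOn_of_convexOn h0 h1 hGg
    (hg.differentiableOn (by norm_num)) hanti hconvex
  have hmono : Monotone fun n => iter T n G := by
    simpa only [coe_iter] using hpos.monotone.monotone_iterate_of_le_map hG
  have hbound (m : ℕ) : iter T m G ≤ ‖G‖ • e 0 := by
    rw [coe_iter]
    refine (hpos.mapsTo_Iic_smul_e_zero h0 ‖G‖).iterate m (ContinuousMap.le_def.2 fun x => ?_)
    simpa using (le_abs_self _).trans (G.norm_coe_le_norm x)
  intro x m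
  refine ⟨?_, hmono m.le_succ x, ?_⟩
  · rw [← hGg]; exact hmono m.zero_le x
  · simpa using ContinuousMap.le_def.1 (hbound (m + 1)) x
end
end

section
/- Let T : C[0,1] → C[0,1] be a positive linear operator with T(e₀) = e₀ and T(e₁) ≥ e₁ (pointwise on [0,1]), and suppose S : C[0,1] → C[0,1] is an operator such that for every f ∈ C[0,1] the iterates T^m(f) converge uniformly on [0,1] to S(f). Then for every g ∈ C[0,1] that is twice continuously differentiable on [0,1], every m ∈ ℕ and every x ∈ [0,1], one has |S(g;x) − T^m(g;x)| ≤ (1/2)·‖g''‖·|S(e₂;x) − T^m(e₂;x)| + ‖g'‖·|T^m(e₁;x) − S(e₁;x)|, where ‖g'‖ and ‖g''‖ denote the sup norms of the first and second derivatives of g on [0,1]. -/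
open Filter

noncomputable section

/-- The sup norm `sup {|h x| : x ∈ [0,1]}` of a function on `[0,1]`. -/
def supAbsOn (h : ℝ → ℝ) : ℝ := sSup ((fun x => |h x|) '' I01)

open Set

/-! Taylor's formula gives `|g s - g t - g' t (s - t)| ≤ ‖g''‖/2 · (s - t)²` on `[0,1]`. Applying a
positive operator `A` with `A e₀ = e₀` and `e₁ ≤ A e₁` to this inequality in `s` and evaluating at
`t` bounds `|A g - g|` by `‖g''‖/2 (A e₂ - e₂) + ‖g'‖ (A e₁ - e₁)`. For `A = Tᵏ` this bound is a
nonnegative function, so applying the positive operator `Tᵐ` transports it to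
`|T^{m+k} g - Tᵐ g|`; letting `k → ∞` gives the estimate. -/

section Taylor

variable {s : Set ℝ} {f f' : ℝ → ℝ} {a b : ℝ}

lemma le_of_hasDerivWithinAt_of_sign_change (hs : Convex ℝ s)
    (hf : ∀ x ∈ s, HasDerivWithinAt f (f' x) s x) (ha : a ∈ s) (hb : b ∈ s)
    (hright : ∀ x ∈ s, a < x → 0 ≤ f' x) (hleft : ∀ x ∈ s, x < a → f' x ≤ 0) :
    f a ≤ f b := by
  rcases le_total a b with hab | hba
  · have hsub : Icc a b ⊆ s := hs.ordConnected.out ha hb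
    refine monotoneOn_of_hasDerivWithinAt_nonneg (convex_Icc a b)
      (fun x hx => ((hf x (hsub hx)).continuousWithinAt).mono hsub)
      (fun x hx => ((hf x (hsub (interior_subset hx))).mono hsub).mono interior_subset)
      (fun x hx => ?_) (left_mem_Icc.2 hab) (right_mem_Icc.2 hab) hab
    rw [interior_Icc] at hx
    exact hright x (hsub (Ioo_subset_Icc_self hx)) hx.1
  · have hsub : Icc b a ⊆ s := hs.ordConnected.out hb ha
    refine antitoneOn_of_hasDerivWithinAt_nonpos (convex_Icc b a)
      (fun x hx => ((hf x (hsub hx)).continuousWithinAt).mono hsub)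
      (fun x hx => ((hf x (hsub (interior_subset hx))).mono hsub).mono interior_subset)
      (fun x hx => ?_) (left_mem_Icc.2 hba) (right_mem_Icc.2 hba) hba
    rw [interior_Icc] at hx
    exact hleft x (hsub (Ioo_subset_Icc_self hx)) hx.2

variable {g g' g'' : ℝ → ℝ} {M : ℝ}

lemma taylor_remainder_le (hs : Convex ℝ s) (hg : ∀ x ∈ s, HasDerivWithinAt g (g' x) s x)
    (hg' : ∀ x ∈ s, HasDerivWithinAt g' (g'' x) s x) (hM : ∀ x ∈ s, |g'' x| ≤ M)
    (ha : a ∈ s) (hb : b ∈ s) :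
    g b - g a - g' a * (b - a) ≤ M / 2 * (b - a) ^ 2 := by
  have hlip : ∀ x ∈ s, |g' x - g' a| ≤ M * |x - a| := fun x hx =>
    hs.norm_image_sub_le_of_norm_hasDerivWithin_le hg' hM ha hx
  have hderiv : ∀ x ∈ s,
      HasDerivWithinAt (fun y => M / 2 * (y - a) ^ 2 - (g y - g a - g' a * (y - a)))
        (M * (x - a) - (g' x - g' a)) s x := by
    intro x hx
    refine ((((hasDerivWithinAt_id x s).sub_const a).pow 2).const_mul (M / 2)).sub
      (((hg x hx).sub_const (g a)).sub (((hasDerivWithinAt_id x s).sub_const a).const_mul (g' a)))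
      |>.congr_deriv ?_
    simp only [id_eq, Nat.cast_ofNat]
    ring
  have key := le_of_hasDerivWithinAt_of_sign_change hs hderiv ha hb
    (fun x hx hax => by
      have := (abs_le.1 (hlip x hx)).2
      rw [abs_of_pos (sub_pos.2 hax)] at this
      linarith)
    (fun x hx hxa => by
      have := (abs_le.1 (hlip x hx)).1
      rw [abs_of_neg (sub_neg.2 hxa)] at this
      linarith)
  simp only [sub_self] at key
  linarith

lemma abs_taylor_remainder_le (hs : Convex ℝ s) (hg : ∀ x ∈ s, HasDerivWithinAt g (g' x) s x)
    (hg' : ∀ x ∈ s, HasDerivWithinAt g' (g'' x) s x) (hM : ∀ x ∈ s, |g'' x| ≤ M)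
    (ha : a ∈ s) (hb : b ∈ s) :
    |g b - g a - g' a * (b - a)| ≤ M / 2 * (b - a) ^ 2 := by
  have hupper := taylor_remainder_le hs hg hg' hM ha hb
  have hlower := taylor_remainder_le (g := fun y => -g y) (g' := fun y => -g' y)
    (g'' := fun y => -g'' y) hs (fun x hx => (hg x hx).neg) (fun x hx => (hg' x hx).neg)
    (fun x hx => by simpa only [abs_neg] using hM x hx) ha hb
  exact abs_le.2 ⟨by linarith, hupper⟩

end Taylor

lemma abs_le_supAbsOn {h : ℝ → ℝ} (hh : ContinuousOn h I01) {x : ℝ} (hx : x ∈ I01) :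
    |h x| ≤ supAbsOn h :=
  le_csSup (isCompact_Icc.image_of_continuousOn hh.abs).bddAbove ⟨x, hx, rfl⟩

@[simp]
lemma e_apply (i : ℕ) (x : I01) : e i x = (x : ℝ) ^ i := rfl

section PositiveOperator

variable {A B T : CI →ₗ[ℝ] CI}

lemma IsPositive.mono (hA : IsPositive A) {f h : CI} (hfh : ∀ t, f t ≤ h t) (t : I01) :
    A f t ≤ A h t := by
  simpa [sub_nonneg] using hA (h - f) (fun s => sub_nonneg.2 (hfh s)) t

lemma IsPositive.abs_apply_le (hA : IsPositive A) {f F : CI} (hfF : ∀ t, |f t| ≤ F t) (t : I01) :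
    |A f t| ≤ A F t := by
  have hupper := hA.mono (fun s => (abs_le.1 (hfF s)).2) t
  have hlower := hA.mono (f := -F) (h := f) (fun s => by simpa using (abs_le.1 (hfF s)).1) t
  rw [map_neg, ContinuousMap.neg_apply] at hlower
  exact abs_le.2 ⟨hlower, hupper⟩

lemma IsPositive.comp (hA : IsPositive A) (hB : IsPositive B) : IsPositive (A ∘ₗ B) :=
  fun f hf t => hA _ (hB f hf) t

lemma isPositive_iter (hT : IsPositive T) : ∀ m, IsPositive (iter T m)
  | 0 => fun _ hf => hf
  | m + 1 => hT.comp (isPositive_iter hT m)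

lemma iter_add_apply (j k : ℕ) (f : CI) : iter T (j + k) f = iter T j (iter T k f) := by
  induction j with
  | zero => simp [iter]
  | succ j ih =>
    rw [Nat.succ_add]
    exact congrArg T ih

lemma iter_apply_e_zero (h0 : T (e 0) = e 0) : ∀ m, iter T m (e 0) = e 0
  | 0 => rfl
  | m + 1 => (congrArg T (iter_apply_e_zero h0 m)).trans h0

lemma e_one_le_iter_apply (hT : IsPositive T) (h1 : ∀ t, e 1 t ≤ T (e 1) t) :
    ∀ m t, e 1 t ≤ iter T m (e 1) t
  | 0 => fun _ => le_rfl
  | m + 1 => fun t => (h1 t).trans (hT.mono (e_one_le_iter_apply hT h1 m) t)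

/-- The second moment `A ((· - t)²) t = A e₂ t - 2 t A e₁ t + t²` is at most `A e₂ t - t²`
because `0 ≤ t ≤ A e₁ t`. -/
lemma IsPositive.abs_apply_sub_le (hA : IsPositive A) (hA0 : A (e 0) = e 0)
    (hA1 : ∀ t, e 1 t ≤ A (e 1) t) {G : CI} {d : I01 → ℝ} {K L : ℝ} (hK : 0 ≤ K)
    (hd : ∀ t, |d t| ≤ L)
    (htaylor : ∀ s t : I01, |G s - G t - d t * (s - t)| ≤ K * ((s : ℝ) - t) ^ 2)
    (t : I01) : |A G t - G t| ≤ K * (A (e 2) t - e 2 t) + L * (A (e 1) t - e 1 t) := by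
  set P : CI := G - (G t - d t * t) • e 0 - d t • e 1
  set Q : CI := K • e 2 - (2 * K * t) • e 1 + (K * (t : ℝ) ^ 2) • e 0
  have hPQ : ∀ s, |P s| ≤ Q s := by
    intro s
    convert htaylor s t using 1
    · simp only [P, ContinuousMap.sub_apply, ContinuousMap.smul_apply, e_apply, smul_eq_mul]
      ring
    · simp only [Q, ContinuousMap.add_apply, ContinuousMap.sub_apply, ContinuousMap.smul_apply,
        e_apply, smul_eq_mul]
      ring
  have hAP : A P t = A G t - G t - d t * (A (e 1) t - t) := by
    simp only [P, map_sub, map_smul, hA0, ContinuousMap.sub_apply, ContinuousMap.smul_apply,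
      e_apply, smul_eq_mul]
    ring
  have hAQ : A Q t = K * (A (e 2) t - 2 * t * A (e 1) t + (t : ℝ) ^ 2) := by
    simp only [Q, map_add, map_sub, map_smul, hA0, ContinuousMap.add_apply,
      ContinuousMap.sub_apply, ContinuousMap.smul_apply, e_apply, smul_eq_mul]
    ring
  have hmoment : (t : ℝ) ≤ A (e 1) t := by simpa using hA1 t
  have hPQ_t := hA.abs_apply_le hPQ t
  rw [hAP, hAQ] at hPQ_t
  calc |A G t - G t|
      = |(A G t - G t - d t * (A (e 1) t - t)) + d t * (A (e 1) t - t)| := by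
        rw [sub_add_cancel]
    _ ≤ |A G t - G t - d t * (A (e 1) t - t)| + |d t| * (A (e 1) t - t) := by
      refine (abs_add_le _ _).trans_eq ?_
      rw [abs_mul, abs_of_nonneg (sub_nonneg.2 hmoment)]
    _ ≤ K * (A (e 2) t - 2 * t * A (e 1) t + (t : ℝ) ^ 2) + L * (A (e 1) t - t) :=
      add_le_add hPQ_t (mul_le_mul_of_nonneg_right (hd t) (sub_nonneg.2 hmoment))
    _ ≤ K * (A (e 2) t - e 2 t) + L * (A (e 1) t - e 1 t) := by
      simp only [e_apply, pow_one]
      nlinarith [mul_nonneg (mul_nonneg hK t.2.1) (sub_nonneg.2 hmoment)]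

lemma IsPositive.abs_apply_comp_sub_le (hA : IsPositive A) {G : CI} {K L : ℝ}
    (hB : ∀ t, |B G t - G t| ≤ K * (B (e 2) t - e 2 t) + L * (B (e 1) t - e 1 t)) (t : I01) :
    |A (B G) t - A G t| ≤ K * (A (B (e 2)) t - A (e 2) t) + L * (A (B (e 1)) t - A (e 1) t) := by
  have hbound := hA.abs_apply_le (f := B G - G) (F := K • (B (e 2) - e 2) + L • (B (e 1) - e 1))
    (by simpa only [ContinuousMap.sub_apply, ContinuousMap.add_apply, ContinuousMap.smul_apply,
      smul_eq_mul] using hB) t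
  simpa only [map_sub, map_add, map_smul, ContinuousMap.sub_apply, ContinuousMap.add_apply,
    ContinuousMap.smul_apply, smul_eq_mul] using hbound

end PositiveOperator

theorem stmt15 (T : CI →ₗ[ℝ] CI) (hpos : IsPositive T)
    (h0 : T (e 0) = e 0) (h1 : ∀ x : I01, e 1 x ≤ T (e 1) x)
    (S : CI → CI)
    (hS : ∀ f : CI, TendstoUniformly (fun m x => iter T m f x) (fun x => S f x) atTop)
    (g g' g'' : ℝ → ℝ) (G : CI) (hGg : ∀ x : I01, G x = g x)
    (hd1 : ∀ x ∈ I01, HasDerivWithinAt g (g' x) I01 x)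
    (hd2 : ∀ x ∈ I01, HasDerivWithinAt g' (g'' x) I01 x)
    (hc : ContinuousOn g'' I01) :
    ∀ m : ℕ, ∀ x : I01,
      |S G x - iter T m G x| ≤
        (1 / 2) * supAbsOn g'' * |S (e 2) x - iter T m (e 2) x|
        + supAbsOn g' * |iter T m (e 1) x - S (e 1) x| := by
  intro m x
  set K := supAbsOn g'' / 2
  set L := supAbsOn g'
  have hL : ∀ t ∈ I01, |g' t| ≤ L := fun t =>
    abs_le_supAbsOn (fun t ht => (hd2 t ht).continuousWithinAt)
  have hM : ∀ t ∈ I01, |g'' t| ≤ supAbsOn g'' := fun t => abs_le_supAbsOn hc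
  have hK_nonneg : 0 ≤ K := div_nonneg ((abs_nonneg _).trans (hM x x.2)) zero_le_two
  have hL_nonneg : 0 ≤ L := (abs_nonneg _).trans (hL x x.2)
  have hstep : ∀ k t, |iter T k G t - G t| ≤
      K * (iter T k (e 2) t - e 2 t) + L * (iter T k (e 1) t - e 1 t) := fun k =>
    (isPositive_iter hpos k).abs_apply_sub_le (iter_apply_e_zero h0 k)
      (e_one_le_iter_apply hpos h1 k) hK_nonneg (d := fun t => g' t) (fun t => hL t t.2)
      (fun s t => by
        simpa only [hGg] using abs_taylor_remainder_le (convex_Icc 0 1) hd1 hd2 hM t.2 s.2)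
  have hshift : ∀ᶠ n in atTop, |iter T n G x - iter T m G x| ≤
      K * (iter T n (e 2) x - iter T m (e 2) x) + L * (iter T n (e 1) x - iter T m (e 1) x) := by
    filter_upwards [eventually_ge_atTop m] with n hn
    obtain ⟨k, rfl⟩ := Nat.exists_eq_add_of_le hn
    simpa only [iter_add_apply] using (isPositive_iter hpos m).abs_apply_comp_sub_le (hstep k) x
  have hlim := le_of_tendsto_of_tendsto (((hS G).tendsto_at x).sub_const _).abs
    (((((hS (e 2)).tendsto_at x).sub_const _).const_mul K).add
      ((((hS (e 1)).tendsto_at x).sub_const _).const_mul L)) hshift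
  calc |S G x - iter T m G x|
      ≤ K * (S (e 2) x - iter T m (e 2) x) + L * (S (e 1) x - iter T m (e 1) x) := hlim
    _ ≤ K * |S (e 2) x - iter T m (e 2) x| + L * |iter T m (e 1) x - S (e 1) x| := by
      rw [abs_sub_comm (iter T m (e 1) x)]
      gcongr <;> exact le_abs_self _
    _ = _ := by ring
end
end
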